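/- arXiv:2402.03745 — 3 statements merged into one kernel-verified Lean document; each statement's English description precedes it below -/
import Mathlib

section
/- Let L : {1,…,N}² → ℤ^d be a link function such that for every t ∈ ℤ^d and every k ∈ {1,…,N}, #{l ∈ {1,…,N} : L(k,l) = t} ≤ B and #{l : L(l,k) = t} ≤ B. Let w : {1,…,p} → Λ be a word with F distinct letters (F = cardinality of the image of w). Define Π*_L(w) to be the set of circuits π : {0,1,…,p} → {1,…,N} with π(0) = π(p) such that for all i, j ∈ {1,…,p}, w(i) = w(j) implies L(π(i−1), π(i)) = L(π(j−1), π(j)). Then #Π*_L(w) ≤ B^{p+1} · N^{F+1}. -/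
/-!
Choose `π 0, …, π p` in order. Position `0`, and position `i + 1` when the letter `w i` occurs
there for the first time, admit at most `N` values; at any other position `i + 1` the label
`L (π i) (π (i + 1))` is already fixed by an earlier occurrence of `w i`, so the row bound leaves
at most `B` values. At most `F + 1` positions are of the first kind.
-/

open Finset

theorem card_le_prod_of_sequential_choices {α : Type*} {n : ℕ} (S : Finset (Fin n → α))
    (c : Fin n → ℕ)
    (h : ∀ f ∈ S, ∀ j, ∃ C : Finset α, #C ≤ c j ∧ ∀ g ∈ S, (∀ i < j, g i = f i) → g j ∈ C) :
    #S ≤ ∏ j, c j := by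
  classical
  induction n with
  | zero => simpa using card_le_one_of_subsingleton S
  | succ n ih =>
    have hinit : #(S.image Fin.init) ≤ ∏ j : Fin n, c j.castSucc := by
      refine ih _ _ fun f' hf' j => ?_
      obtain ⟨f, hf, rfl⟩ := mem_image.1 hf'
      obtain ⟨C, hC, hmem⟩ := h f hf j.castSucc
      refine ⟨C, hC, fun g' hg' hagree => ?_⟩
      obtain ⟨g, hg, rfl⟩ := mem_image.1 hg'
      refine hmem g hg fun i hi => ?_
      simpa [Fin.init] using hagree (i.castLT (hi.trans j.castSucc_lt_last)) hi
    have hfiber : ∀ f' ∈ S.image Fin.init, #{g ∈ S | Fin.init g = f'} ≤ c (Fin.last n) := by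
      intro f' hf'
      obtain ⟨f, hf, rfl⟩ := mem_image.1 hf'
      obtain ⟨C, hC, hmem⟩ := h f hf (Fin.last n)
      refine le_trans (card_le_card_of_injOn (· (Fin.last n)) ?_ ?_) hC
      · intro g hg
        rw [coe_filter] at hg
        exact hmem g hg.1 fun i hi => by
          simpa [Fin.init] using congrFun hg.2 (i.castLT hi)
      · intro g₁ hg₁ g₂ hg₂ hlast
        rw [coe_filter] at hg₁ hg₂
        rw [← Fin.snoc_init_self g₁, ← Fin.snoc_init_self g₂, hg₁.2, hg₂.2]
        exact congrArg _ hlast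
    calc #S ≤ c (Fin.last n) * #(S.image Fin.init) := card_le_mul_card_image S _ hfiber
      _ ≤ ∏ j, c j := by
        rw [Fin.prod_univ_castSucc, mul_comm]
        gcongr

theorem ncard_setOf_not_exists_lt_eq_le {ι Λ : Type*} [Finite ι] [LinearOrder ι] (w : ι → Λ) :
    {i | ¬∃ j < i, w j = w i}.ncard ≤ (Set.range w).ncard :=
  Set.ncard_le_ncard_of_injOn w (fun i _ => Set.mem_range_self i)
    (fun i₁ h₁ i₂ h₂ hw => le_antisymm (not_lt.1 fun h => h₁ ⟨i₂, h, hw.symm⟩)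
      (not_lt.1 fun h => h₂ ⟨i₁, h, hw⟩)) (Set.finite_range w)

def IsCompatible {α T Λ : Type*} {p : ℕ} (L : α → α → T) (w : Fin p → Λ)
    (π : Fin (p + 1) → α) : Prop :=
  ∀ i j : Fin p, w i = w j → L (π i.castSucc) (π i.succ) = L (π j.castSucc) (π j.succ)

-- Position `i.succ` of a circuit closes the edge read at the letter `w i`.
open Classical in
noncomputable def choiceBound {Λ : Type*} {p : ℕ} (N B : ℕ) (w : Fin p → Λ) :
    Fin (p + 1) → ℕ :=
  Fin.cases N fun i => if ∃ i' < i, w i' = w i then B else N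

theorem exists_finset_card_le_choiceBound {α T Λ : Type*} [Fintype α] {p B : ℕ}
    {L : α → α → T} (hB : ∀ k t, {l | L k l = t}.ncard ≤ B) (w : Fin p → Λ)
    (π : Fin (p + 1) → α) (j : Fin (p + 1)) :
    ∃ C : Finset α, #C ≤ choiceBound (Fintype.card α) B w j ∧
      ∀ π', IsCompatible L w π' → (∀ i < j, π' i = π i) → π' j ∈ C := by
  classical
  cases j using Fin.cases with
  | zero => exact ⟨univ, by simp [choiceBound], by simp⟩
  | succ i =>
    by_cases hrep : ∃ i' < i, w i' = w i
    · have hbound : choiceBound (Fintype.card α) B w i.succ = B := by simp [choiceBound, hrep]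
      obtain ⟨i', hi', hw⟩ := hrep
      refine ⟨{l | L (π i.castSucc) l = L (π i'.castSucc) (π i'.succ)}.toFinset, ?_, ?_⟩
      · rw [hbound, ← Set.ncard_eq_toFinset_card']
        exact hB _ _
      · intro π' hπ' hagree
        have hi'_succ : i'.succ < i.succ := Fin.succ_lt_succ_iff.2 hi'
        rw [Set.mem_toFinset, Set.mem_ofPred_eq, ← hagree i.castSucc i.castSucc_lt_succ,
          hπ' i i' hw.symm, hagree i'.castSucc (i'.castSucc_lt_succ.trans hi'_succ),
          hagree i'.succ hi'_succ]
    · exact ⟨univ, by simp [choiceBound, hrep], by simp⟩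

theorem prod_choiceBound_le {Λ : Type*} {p N B : ℕ} (hB : 0 < N → 1 ≤ B) (w : Fin p → Λ) :
    ∏ j, choiceBound N B w j ≤ B ^ (p + 1) * N ^ ((Set.range w).ncard + 1) := by
  classical
  rcases N.eq_zero_or_pos with rfl | hN
  · simp [choiceBound, Fin.prod_univ_succ]
  have hrepeats : #{i | ∃ i' < i, w i' = w i} ≤ p + 1 := (card_filter_le _ _).trans (by simp)
  have hfirst : #{i | ¬∃ i' < i, w i' = w i} ≤ (Set.range w).ncard := by
    simpa [← Set.ncard_coe_finset] using ncard_setOf_not_exists_lt_eq_le w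
  rw [Fin.prod_univ_succ]
  simp only [choiceBound, Fin.cases_zero, Fin.cases_succ]
  rw [prod_ite, prod_const, prod_const, mul_left_comm, ← pow_succ']
  gcongr
  exact hB hN

/-- If a link function `L` on `{1,…,N}²` (valued in `ℤ^d`) satisfies Property B with
constant `B` (in both coordinates), then for any word `w` of length `p` with `F`
distinct letters, the set `Π*_L(w)` of circuits compatible with `w` has at most
`B^(p+1) · N^(F+1)` elements. -/
theorem card_PiStar_word_le
    {Λ : Type*} (N p B d : ℕ) (L : Fin N → Fin N → Fin d → ℤ)
    (hB : ∀ (t : Fin d → ℤ) (k : Fin N),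
      {l : Fin N | L k l = t}.ncard ≤ B ∧ {l : Fin N | L l k = t}.ncard ≤ B)
    (w : Fin p → Λ) :
    {π : Fin (p + 1) → Fin N | π 0 = π (Fin.last p) ∧
        ∀ i j : Fin p, w i = w j →
          L (π i.castSucc) (π i.succ) = L (π j.castSucc) (π j.succ)}.ncard
      ≤ B ^ (p + 1) * N ^ ((Set.range w).ncard + 1) := by
  classical
  have hrow (k t) : {l | L k l = t}.ncard ≤ B := (hB t k).1
  have hB_pos (hN : 0 < N) : 1 ≤ B := by
    let z : Fin N := ⟨0, hN⟩
    have hz : 0 < {l | L z l = L z z}.ncard := (Set.ncard_pos (Set.toFinite _)).2 ⟨z, rfl⟩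
    exact hz.trans_le (hrow z (L z z))
  calc _ ≤ {π | IsCompatible L w π}.ncard := Set.ncard_le_ncard fun π hπ => hπ.2
    _ = #{π | IsCompatible L w π}.toFinset := Set.ncard_eq_toFinset_card' _
    _ ≤ ∏ j, choiceBound N B w j := by
      refine card_le_prod_of_sequential_choices _ _ fun π _ j => ?_
      obtain ⟨C, hC, hmem⟩ := exists_finset_card_le_choiceBound hrow w π j
      exact ⟨C, by simpa using hC, fun π' hπ' => hmem π' (Set.mem_toFinset.1 hπ')⟩
    _ ≤ _ := prod_choiceBound_le hB_pos w
end

section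
/- Let L : {1,…,N}² → ℤ^d satisfy: for every t ∈ ℤ^d and every k ∈ {1,…,N}, #{l : L(k,l) = t} ≤ B and #{l : L(l,k) = t} ≤ B. Let w : {1,…,p} → Λ be a word with F distinct letters, and suppose some letter a in the image of w has a fiber of size exactly one. Then #Π*_L(w) ≤ B^{p+1} · N^{F}, where Π*_L(w) is the set of circuits π : {0,…,p} → {1,…,N} with π(0) = π(p) satisfying: w(i) = w(j) implies L(π(i−1),π(i)) = L(π(j−1),π(j)). -/
/-!
Rotate the circuit so that the edge carrying the letter that occurs only once becomes the
closing edge, and forget that edge: what remains is a path with `p - 1` edges using the other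
`F - 1` letters, from which the circuit is recovered. A path compatible with a word is built
edge by edge: its starting vertex and the endpoint of the first edge of each letter are free
(`N` choices each), while every other edge must have the same `L`-value as an earlier edge of
its letter, which leaves at most `B` choices for its endpoint. Hence there are at most
`N ^ F * B ^ (p - F)` circuits.
-/

open Set

theorem Set.ncard_le_mul_ncard_of_mapsTo {α β : Type*} {s : Set α} {t : Set β} {f : α → β}
    (ht : t.Finite) (hf : MapsTo f s t) (k : ℕ) (hk : ∀ b ∈ t, (s ∩ f ⁻¹' {b}).ncard ≤ k) :
    s.ncard ≤ k * t.ncard := by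
  classical
  rcases s.finite_or_infinite with hs | hs
  · obtain ⟨S, rfl⟩ := hs.exists_finset_coe
    obtain ⟨T, rfl⟩ := ht.exists_finset_coe
    rw [ncard_coe_finset, ncard_coe_finset]
    refine Finset.card_le_mul_card_image_of_maps_to hf k fun b hb => ?_
    rw [← ncard_coe_finset, Finset.coe_filter]
    exact hk b hb
  · simp [hs.ncard]

theorem Set.ncard_range_le {ι γ : Type*} [Finite ι] (f : ι → γ) :
    (range f).ncard ≤ Nat.card ι := by
  rw [← image_univ, ← ncard_univ]
  exact ncard_image_le (toFinite _)

section

variable {α β Λ : Type*}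

theorem Fin.injOn_last_of_init_eq {n : ℕ} (σ : Fin n → α) :
    InjOn (fun π : Fin (n + 1) → α => π (Fin.last n)) (Fin.init ⁻¹' {σ}) := by
  intro π hπ π' hπ' h
  rw [← Fin.snoc_init_self π, ← Fin.snoc_init_self π']
  simp_all

theorem Fin.apply_castSucc_add_one {n : ℕ} {π : Fin (n + 2) → α} (h : π 0 = π (Fin.last _))
    (e : Fin (n + 1)) : π (e + 1).castSucc = π e.succ := by
  cases e using Fin.lastCases with
  | last => rw [Fin.last_add_one, Fin.succ_last]; exact h
  | cast i => rw [Fin.coeSucc_eq_succ, Fin.succ_castSucc]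

theorem Fin.injOn_init_comp_add_right {n : ℕ} (s : Fin (n + 1)) :
    InjOn (fun π : Fin (n + 2) → α => Fin.init π ∘ (· + s)) {π | π 0 = π (Fin.last _)} := by
  intro π hπ π' hπ' h
  have hinit : Fin.init π = Fin.init π' := (add_right_surjective s).injective_comp_right h
  rw [← Fin.snoc_init_self π, ← Fin.snoc_init_self π', ← hπ.out, ← hπ'.out]
  exact congr_arg₂ Fin.snoc hinit (congr_fun hinit 0)

theorem Fin.range_comp_castSucc_add_eq_diff {n : ℕ} {w : Fin (n + 1) → Λ} {j₀ : Fin (n + 1)}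
    (hj₀ : ∀ j, w j = w j₀ → j = j₀) :
    range (fun i : Fin n => w (i.castSucc + (j₀ + 1))) = range w \ {w j₀} := by
  ext b
  constructor
  · rintro ⟨i, rfl⟩
    refine ⟨mem_range_self _, fun h => Fin.succ_ne_zero i (add_eq_right (b := j₀) |>.mp ?_)⟩
    rw [← Fin.coeSucc_eq_succ, add_right_comm, add_assoc]
    exact hj₀ _ h
  · rintro ⟨⟨j, rfl⟩, hj⟩
    have hlast : j - (j₀ + 1) ≠ Fin.last n := fun h => hj <| by
      rw [mem_singleton_iff, ← sub_add_cancel j (j₀ + 1), h, ← add_assoc, add_right_comm,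
        Fin.last_add_one, zero_add]
    obtain ⟨i, hi⟩ := Fin.exists_castSucc_eq.2 hlast
    exact ⟨i, congrArg w (by rw [hi, sub_add_cancel])⟩

def compatiblePaths (L : α → α → β) {n : ℕ} (w : Fin n → Λ) : Set (Fin (n + 1) → α) :=
  {π | ∀ i j : Fin n, w i = w j → L (π i.castSucc) (π i.succ) = L (π j.castSucc) (π j.succ)}

def compatibleCircuits (L : α → α → β) {n : ℕ} (w : Fin n → Λ) : Set (Fin (n + 1) → α) :=
  {π | π 0 = π (Fin.last n) ∧ π ∈ compatiblePaths L w}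

namespace compatiblePaths

variable {L : α → α → β}

theorem init_mem {n : ℕ} {w : Fin (n + 1) → Λ} {π : Fin (n + 2) → α}
    (hπ : π ∈ compatiblePaths L w) : Fin.init π ∈ compatiblePaths L (Fin.init w) := by
  intro i j hij
  simpa only [Fin.init, Fin.succ_castSucc] using hπ i.castSucc j.castSucc hij

theorem ncard_inter_init_preimage_le_card [Finite α] {n : ℕ} (w : Fin (n + 1) → Λ)
    (σ : Fin (n + 1) → α) :
    (compatiblePaths L w ∩ Fin.init ⁻¹' {σ}).ncard ≤ Nat.card α := by
  rw [← ncard_univ]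
  exact ncard_le_ncard_of_injOn _ (fun _ _ => mem_univ _)
    ((Fin.injOn_last_of_init_eq σ).mono inter_subset_right)

theorem ncard_inter_init_preimage_le_of_repeat [Finite α] {B : ℕ}
    (hL : ∀ a t, {b | L a b = t}.ncard ≤ B) {n : ℕ} {w : Fin (n + 1) → Λ} {i₀ : Fin n}
    (hi₀ : w i₀.castSucc = w (Fin.last n)) (σ : Fin (n + 1) → α) :
    (compatiblePaths L w ∩ Fin.init ⁻¹' {σ}).ncard ≤ B := by
  refine (ncard_le_ncard_of_injOn (fun π => π (Fin.last _)) ?_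
    ((Fin.injOn_last_of_init_eq σ).mono inter_subset_right)).trans
    (hL (σ (Fin.last n)) (L (σ i₀.castSucc) (σ i₀.succ)))
  rintro π ⟨hπ, rfl⟩
  have h := hπ (Fin.last n) i₀.castSucc hi₀.symm
  rw [Fin.succ_last, Fin.succ_castSucc] at h
  exact h

theorem ncard_le [Finite α] {B : ℕ} (hL : ∀ a t, {b | L a b = t}.ncard ≤ B) :
    ∀ {n : ℕ} (w : Fin n → Λ), (compatiblePaths L w).ncard ≤
      Nat.card α ^ ((range w).ncard + 1) * B ^ (n - (range w).ncard)
  | 0, w => by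
    have : compatiblePaths L w = univ := eq_univ_of_forall fun _ i => i.elim0
    simp [this, Nat.card_fun]
  | n + 1, w => by
    have hstep (k : ℕ) (hk : ∀ σ, (compatiblePaths L w ∩ Fin.init ⁻¹' {σ}).ncard ≤ k) :
        (compatiblePaths L w).ncard ≤ k * (compatiblePaths L (Fin.init w)).ncard :=
      ncard_le_mul_ncard_of_mapsTo (toFinite _) (fun _ => init_mem) k fun σ _ => hk σ
    have hrange : range w = insert (w (Fin.last n)) (range (Fin.init w)) := by
      rw [← Fin.range_snoc, Fin.snoc_init_self]
    have hF : (range (Fin.init w)).ncard ≤ n := by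
      simpa using ncard_range_le (Fin.init w)
    have ih := ncard_le hL (Fin.init w)
    by_cases hrepeat : w (Fin.last n) ∈ range (Fin.init w)
    · rw [hrange, insert_eq_of_mem hrepeat]
      obtain ⟨i₀, hi₀⟩ := hrepeat
      calc _ ≤ B * (compatiblePaths L (Fin.init w)).ncard :=
            hstep B (ncard_inter_init_preimage_le_of_repeat hL hi₀)
        _ ≤ B * (Nat.card α ^ ((range (Fin.init w)).ncard + 1) *
              B ^ (n - (range (Fin.init w)).ncard)) := by gcongr
        _ = _ := by rw [Nat.sub_add_comm hF, pow_succ]; ring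
    · rw [hrange, ncard_insert_of_notMem hrepeat]
      calc _ ≤ Nat.card α * (compatiblePaths L (Fin.init w)).ncard :=
            hstep _ (ncard_inter_init_preimage_le_card w)
        _ ≤ Nat.card α * (Nat.card α ^ ((range (Fin.init w)).ncard + 1) *
              B ^ (n - (range (Fin.init w)).ncard)) := by gcongr
        _ = _ := by rw [Nat.add_sub_add_right]; ring

end compatiblePaths

namespace compatibleCircuits

variable {L : α → α → β}

/-- A circuit is a function on the cycle `Fin (n + 1)`; rotated by `s`, it is a path whose
edges are the circuit's edges `s, s + 1, …, s + n - 1`, i.e. all of them except edge `s - 1`. -/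
theorem init_comp_add_right_mem {n : ℕ} {w : Fin (n + 1) → Λ} {π : Fin (n + 2) → α}
    (hπ : π ∈ compatibleCircuits L w) (s : Fin (n + 1)) :
    Fin.init π ∘ (· + s) ∈ compatiblePaths L (fun i : Fin n => w (i.castSucc + s)) := by
  have hedge (i : Fin n) : (Fin.init π ∘ (· + s)) i.succ = π (i.castSucc + s).succ := by
    show π (i.succ + s).castSucc = _
    rw [← Fin.coeSucc_eq_succ, add_right_comm]
    exact Fin.apply_castSucc_add_one hπ.1 _
  intro i j hij
  rw [hedge, hedge]
  exact hπ.2 _ _ hij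

theorem ncard_le [Finite α] {B : ℕ} (hL : ∀ a t, {b | L a b = t}.ncard ≤ B) {p : ℕ}
    (w : Fin p → Λ) (j₀ : Fin p) (hj₀ : ∀ j, w j = w j₀ → j = j₀) :
    (compatibleCircuits L w).ncard ≤
      Nat.card α ^ (range w).ncard * B ^ (p - (range w).ncard) := by
  obtain ⟨n, rfl⟩ := Nat.exists_eq_add_one_of_ne_zero j₀.pos.ne'
  set v : Fin n → Λ := fun i => w (i.castSucc + (j₀ + 1))
  have hF : (range v).ncard + 1 = (range w).ncard := by
    rw [Fin.range_comp_castSucc_add_eq_diff hj₀,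
      ncard_sdiff_singleton_add_one (mem_range_self j₀)]
  calc (compatibleCircuits L w).ncard ≤ (compatiblePaths L v).ncard :=
        ncard_le_ncard_of_injOn _ (fun _ hπ => init_comp_add_right_mem hπ _)
          ((Fin.injOn_init_comp_add_right _).mono fun _ hπ => hπ.1)
    _ ≤ _ := compatiblePaths.ncard_le hL v
    _ = _ := by rw [hF]; congr 2; omega

end compatibleCircuits

end

/-- If a link function `L` on `{1,…,N}²` satisfies Property B with constant `B`
(in both coordinates), `w` is a word of length `p` with `F` distinct letters, and
some letter of `w` has a fiber of size exactly one, then the set `Π*_L(w)` of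
circuits compatible with `w` has at most `B^(p+1) · N^F` elements. -/
theorem card_PiStar_word_le_of_single_letter
    {Λ : Type*} (N p B d : ℕ) (L : Fin N → Fin N → Fin d → ℤ)
    (hB : ∀ (t : Fin d → ℤ) (k : Fin N),
      {l : Fin N | L k l = t}.ncard ≤ B ∧ {l : Fin N | L l k = t}.ncard ≤ B)
    (w : Fin p → Λ)
    (j₀ : Fin p) (hj₀ : ∀ j : Fin p, w j = w j₀ → j = j₀) :
    {π : Fin (p + 1) → Fin N | π 0 = π (Fin.last p) ∧
        ∀ i j : Fin p, w i = w j →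
          L (π i.castSucc) (π i.succ) = L (π j.castSucc) (π j.succ)}.ncard
      ≤ B ^ (p + 1) * N ^ (Set.range w).ncard := by
  rcases N.eq_zero_or_pos with rfl | hN
  · simp [eq_empty_of_isEmpty]
  have hB₁ : 1 ≤ B := by
    let k : Fin N := ⟨0, hN⟩
    exact ((ncard_pos (toFinite {l | L k l = L k k})).2 ⟨k, rfl⟩).trans_le (hB (L k k) k).1
  calc _ ≤ N ^ (range w).ncard * B ^ (p - (range w).ncard) := by
        have h := compatibleCircuits.ncard_le (fun k t => (hB t k).1) w j₀ hj₀
        rwa [Nat.card_fin] at h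
    _ ≤ B ^ (p + 1) * N ^ (range w).ncard := by
        rw [mul_comm]
        gcongr
        omega
end

section
/- Let k ≥ 3 and let S₁,…,S_k be nonempty finite sets (of letters). Form the intersection graph G on vertex set {1,…,k} with an edge {i,j} (i ≠ j) whenever Sᵢ ∩ Sⱼ ≠ ∅. Suppose G is connected but it is NOT the case that G is complete and there exists a single element a with Sᵢ ∩ Sⱼ = {a} for all i ≠ j. Then there exist pairwise distinct indices i₁, i₂, i₃ and elements a₁ ∈ S_{i₁} ∩ S_{i₂}, a₂ ∈ S_{i₂} ∩ S_{i₃} with a₁ ≠ a₂. -/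
/-!
If the intersection graph is not complete, a shortest path between two non-adjacent vertices
starts with an induced path `i₁ – i₂ – i₃`; since `S i₁` and `S i₃` are disjoint, any witnesses
of its two edges differ. If the graph is complete and no such path exists, witnesses of edges
sharing a vertex coincide, and any two edges are joined through at most one intermediate edge,
so all pairwise intersections are the same singleton.
-/

open Finset

namespace SimpleGraph

lemma Reachable.exists_adj_adj_not_adj_ne {V : Type*} {G : SimpleGraph V} {u v : V}
    (hr : G.Reachable u v) (huv : u ≠ v) (hnadj : ¬G.Adj u v) :
    ∃ x a b, G.Adj x a ∧ G.Adj a b ∧ ¬G.Adj x b ∧ x ≠ b := by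
  obtain ⟨p, hp⟩ := hr.exists_walk_length_eq_dist
  exact p.exists_adj_adj_not_adj_ne hp (hr.one_lt_dist_of_ne_of_not_adj huv hnadj)

end SimpleGraph

section

variable {ι Λ : Type*} [DecidableEq Λ] {S : ι → Finset Λ}

variable (S) in
def HasTwoWitnessPath : Prop :=
  ∃ i₁ i₂ i₃ : ι, i₁ ≠ i₂ ∧ i₂ ≠ i₃ ∧ i₁ ≠ i₃ ∧
    ∃ a₁ ∈ S i₁ ∩ S i₂, ∃ a₂ ∈ S i₂ ∩ S i₃, a₁ ≠ a₂

lemma hasTwoWitnessPath_of_disjoint {i j m : ι} (hij : i ≠ j) (hjm : j ≠ m) (him : i ≠ m)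
    (hSij : (S i ∩ S j).Nonempty) (hSjm : (S j ∩ S m).Nonempty) (hSim : Disjoint (S i) (S m)) :
    HasTwoWitnessPath S := by
  obtain ⟨a, ha⟩ := hSij
  obtain ⟨b, hb⟩ := hSjm
  refine ⟨i, j, m, hij, hjm, him, a, ha, b, hb, ?_⟩
  rintro rfl
  exact disjoint_left.1 hSim (mem_inter.1 ha).1 (mem_inter.1 hb).2

lemma eq_of_not_hasTwoWitnessPath (h : ¬HasTwoWitnessPath S) {i j m : ι} {a b : Λ}
    (hij : i ≠ j) (hjm : j ≠ m) (him : i ≠ m) (ha : a ∈ S i ∩ S j) (hb : b ∈ S j ∩ S m) :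
    a = b := by
  by_contra hab
  exact h ⟨i, j, m, hij, hjm, him, a, ha, b, hb, hab⟩

section Complete

variable (hι : 3 ≤ ENat.card ι) (hS : ∀ i j, i ≠ j → (S i ∩ S j).Nonempty)
  (h : ¬HasTwoWitnessPath S)
include hι hS h

lemma eq_of_not_hasTwoWitnessPath_of_shared_index {i j m : ι} {a b : Λ}
    (hij : i ≠ j) (hjm : j ≠ m) (ha : a ∈ S i ∩ S j) (hb : b ∈ S j ∩ S m) : a = b := by
  by_cases him : i = m
  · subst him
    obtain ⟨n, hni, hnj⟩ := ENat.exists_ne_ne_of_three_le hι i j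
    obtain ⟨c, hc⟩ := hS j n hnj.symm
    rw [inter_comm] at hb
    exact (eq_of_not_hasTwoWitnessPath h hij hnj.symm hni.symm ha hc).trans
      (eq_of_not_hasTwoWitnessPath h hij hnj.symm hni.symm hb hc).symm
  · exact eq_of_not_hasTwoWitnessPath h hij hjm him ha hb

lemma eq_of_not_hasTwoWitnessPath_of_ne_of_ne {i j p q : ι} {a b : Λ}
    (hij : i ≠ j) (hpq : p ≠ q) (ha : a ∈ S i ∩ S j) (hb : b ∈ S p ∩ S q) : a = b := by
  by_cases hjp : j = p
  · subst hjp
    exact eq_of_not_hasTwoWitnessPath_of_shared_index hι hS h hij hpq ha hb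
  · obtain ⟨c, hc⟩ := hS j p hjp
    exact (eq_of_not_hasTwoWitnessPath_of_shared_index hι hS h hij hjp ha hc).trans
      (eq_of_not_hasTwoWitnessPath_of_shared_index hι hS h hjp hpq hc hb)

lemma exists_inter_eq_singleton_of_not_hasTwoWitnessPath :
    ∃ a, ∀ i j, i ≠ j → S i ∩ S j = {a} := by
  have : Nontrivial ι := (ENat.one_lt_card_iff_nontrivial ι).1 (lt_of_lt_of_le (by norm_num) hι)
  obtain ⟨i₀, j₀, h₀⟩ := exists_pair_ne ι
  obtain ⟨a, ha⟩ := hS i₀ j₀ h₀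
  refine ⟨a, fun i j hij => ?_⟩
  obtain ⟨b, hb⟩ := hS i j hij
  refine eq_singleton_iff_nonempty_unique_mem.2 ⟨⟨b, hb⟩, fun c hc => ?_⟩
  exact eq_of_not_hasTwoWitnessPath_of_ne_of_ne hι hS h hij h₀ hc ha

end Complete

end

theorem exists_two_distinct_witnesses_of_not_clique_cluster_general
    {Λ : Type*} [DecidableEq Λ] (k : ℕ) (hk : 3 ≤ k)
    (S : Fin k → Finset Λ)
    (G : SimpleGraph (Fin k))
    (hG : ∀ i j, G.Adj i j ↔ i ≠ j ∧ (S i ∩ S j).Nonempty)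
    (hconn : G.Connected)
    (hnot : ¬ ((∀ i j : Fin k, i ≠ j → G.Adj i j) ∧
      ∃ a : Λ, ∀ i j : Fin k, i ≠ j → S i ∩ S j = {a})) :
    ∃ i₁ i₂ i₃ : Fin k, i₁ ≠ i₂ ∧ i₂ ≠ i₃ ∧ i₁ ≠ i₃ ∧
      ∃ a₁ ∈ S i₁ ∩ S i₂, ∃ a₂ ∈ S i₂ ∩ S i₃, a₁ ≠ a₂ := by
  by_cases hcomplete : ∀ i j : Fin k, i ≠ j → G.Adj i j
  · have hS : ∀ i j, i ≠ j → (S i ∩ S j).Nonempty := fun i j hij =>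
      ((hG i j).1 (hcomplete i j hij)).2
    by_contra h
    exact hnot ⟨hcomplete,
      exists_inter_eq_singleton_of_not_hasTwoWitnessPath (by simpa using hk) hS h⟩
  · push Not at hcomplete
    obtain ⟨u, v, huv, hnadj⟩ := hcomplete
    obtain ⟨i, j, m, hij, hjm, hnim, him⟩ := (hconn u v).exists_adj_adj_not_adj_ne huv hnadj
    rw [hG] at hij hjm hnim
    exact hasTwoWitnessPath_of_disjoint hij.1 hjm.1 him hij.2 hjm.2
      (by simpa [him, ← not_disjoint_iff_nonempty_inter] using hnim)

/-- Let `G` be the intersection graph of nonempty finite sets `S₁,…,S_k` (`k ≥ 3`).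
If `G` is connected but is not a clique cluster (i.e. it is not the case that `G` is
complete with all pairwise intersections equal to the same singleton `{a}`), then
there are pairwise distinct `i₁, i₂, i₃` and elements `a₁ ∈ S_{i₁} ∩ S_{i₂}`,
`a₂ ∈ S_{i₂} ∩ S_{i₃}` with `a₁ ≠ a₂`. -/
theorem exists_two_distinct_witnesses_of_not_clique_cluster
    {Λ : Type*} [DecidableEq Λ] (k : ℕ) (hk : 3 ≤ k)
    (S : Fin k → Finset Λ) (hS : ∀ i, (S i).Nonempty)
    (G : SimpleGraph (Fin k))
    (hG : ∀ i j, G.Adj i j ↔ i ≠ j ∧ (S i ∩ S j).Nonempty)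
    (hconn : G.Connected)
    (hnot : ¬ ((∀ i j : Fin k, i ≠ j → G.Adj i j) ∧
      ∃ a : Λ, ∀ i j : Fin k, i ≠ j → S i ∩ S j = {a})) :
    ∃ i₁ i₂ i₃ : Fin k, i₁ ≠ i₂ ∧ i₂ ≠ i₃ ∧ i₁ ≠ i₃ ∧
      ∃ a₁ ∈ S i₁ ∩ S i₂, ∃ a₂ ∈ S i₂ ∩ S i₃, a₁ ≠ a₂ :=
  exists_two_distinct_witnesses_of_not_clique_cluster_general k hk S G hG hconn hnot
end
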